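/- Consider c : ℝ^d → ℝ defined by c(z) = ((|z| − 1)₊)², where (s)₊ = max(s,0) and |·| is the Euclidean norm. Then c is convex, and for every p ∈ ℝ^d the face ∂c*(p) is a singleton unless p = 0, in which case ∂c*(0) is the closed Euclidean unit ball B̄(0,1). -/

import Mathlib

/-!
The conjugate is radial: `c*(p) = g*(‖p‖)` for `g r = ((r - 1)₊)²`, and a one-variable computation
gives `c*(p) = ‖p‖ + ‖p‖² / 4`, the supremum being attained at `(‖p‖⁻¹ + 2⁻¹) • p`. For `p ≠ 0`
this function is differentiable at `p`, so its subdifferential there has at most one point, and the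
attaining point lies in it. At `p = 0` a subgradient `z` must satisfy `⟪z, q⟫ ≤ ‖q‖ + ‖q‖² / 4`
for all `q`, which along the ray through `z` forces `‖z‖ ≤ 1`.
-/

open scoped RealInnerProductSpace

/-- The Legendre–Fenchel conjugate of a real-valued function on `ℝ^d`, valued in `EReal`. -/
noncomputable def fenchelConj {d : ℕ} (c : EuclideanSpace ℝ (Fin d) → ℝ)
    (p : EuclideanSpace ℝ (Fin d)) : EReal :=
  ⨆ z, (((inner ℝ p z : ℝ) - c z : ℝ) : EReal)

/-- The face `∂c*(p)` of `c`. -/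
noncomputable def face {d : ℕ} (c : EuclideanSpace ℝ (Fin d) → ℝ)
    (p : EuclideanSpace ℝ (Fin d)) : Set (EuclideanSpace ℝ (Fin d)) :=
  {z | ∀ q, fenchelConj c p + ((inner ℝ z (q - p) : ℝ) : EReal) ≤ fenchelConj c q}

section

variable {E : Type*} [NormedAddCommGroup E] [InnerProductSpace ℝ E]

def subdifferential (f : E → ℝ) (p : E) : Set E :=
  {z | ∀ q, f p + ⟪z, q - p⟫ ≤ f q}

theorem fderiv_eq_innerSL_of_mem_subdifferential {f : E → ℝ} {p z : E}
    (hf : DifferentiableAt ℝ f p) (hz : z ∈ subdifferential f p) :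
    fderiv ℝ f p = innerSL ℝ z := by
  have hmin : IsLocalMin (fun q => f q - ⟪z, q⟫) p :=
    Filter.Eventually.of_forall fun q => by
      have := hz q
      rw [inner_sub_right] at this
      dsimp only
      linarith
  have hderiv : HasFDerivAt (fun q => f q - ⟪z, q⟫) (fderiv ℝ f p - innerSL ℝ z) p :=
    hf.hasFDerivAt.sub (innerSL ℝ z).hasFDerivAt
  exact sub_eq_zero.mp (hmin.hasFDerivAt_eq_zero hderiv)

theorem subdifferential_subsingleton {f : E → ℝ} {p : E} (hf : DifferentiableAt ℝ f p) :
    (subdifferential f p).Subsingleton := fun _ hz _ hz' =>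
  innerSL_inj.mp <| (fderiv_eq_innerSL_of_mem_subdifferential hf hz).symm.trans
    (fderiv_eq_innerSL_of_mem_subdifferential hf hz')

theorem mul_sub_sq_posPart_le (t r : ℝ) (ht : 0 ≤ t) :
    t * r - (max (r - 1) 0) ^ 2 ≤ t + t ^ 2 / 4 := by
  rcases le_total r 1 with h | h
  · rw [max_eq_right (by linarith)]
    nlinarith
  · rw [max_eq_left (by linarith)]
    nlinarith [sq_nonneg (r - 1 - t / 2)]

/-- The point where the supremum defining `c*(p)` is attained; for `p ≠ 0` it is `∇c*(p)`. -/
noncomputable def conjArgmax (p : E) : E := (‖p‖⁻¹ + 2⁻¹) • p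

theorem inner_conjArgmax_sub (p : E) :
    ⟪p, conjArgmax p⟫ - (max (‖conjArgmax p‖ - 1) 0) ^ 2 = ‖p‖ + ‖p‖ ^ 2 / 4 := by
  rcases eq_or_ne p 0 with rfl | hp
  · simp [conjArgmax]
  have hs : 0 < ‖p‖ := norm_pos_iff.mpr hp
  have hnorm : ‖conjArgmax p‖ = 1 + ‖p‖ / 2 := by
    rw [conjArgmax, norm_smul, Real.norm_of_nonneg (by positivity)]
    field_simp
  rw [hnorm, conjArgmax, real_inner_smul_right, real_inner_self_eq_norm_sq,
    max_eq_left (by linarith)]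
  field_simp
  ring

theorem conjArgmax_mem_subdifferential {p : E} (hp : p ≠ 0) :
    conjArgmax p ∈ subdifferential (fun q => ‖q‖ + ‖q‖ ^ 2 / 4) p := by
  intro q
  have hs : 0 < ‖p‖ := norm_pos_iff.mpr hp
  have hinner : ⟪conjArgmax p, q - p⟫ ≤ (1 + ‖p‖ / 2) * (‖q‖ - ‖p‖) := by
    rw [conjArgmax, real_inner_smul_left, inner_sub_right, real_inner_self_eq_norm_sq]
    calc (‖p‖⁻¹ + 2⁻¹) * (⟪p, q⟫ - ‖p‖ ^ 2)
        ≤ (‖p‖⁻¹ + 2⁻¹) * (‖p‖ * ‖q‖ - ‖p‖ ^ 2) := by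
          gcongr
          exact real_inner_le_norm p q
      _ = (1 + ‖p‖ / 2) * (‖q‖ - ‖p‖) := by field_simp
  -- the tangent-line inequality for `r ↦ r + r² / 4` at `‖p‖`
  nlinarith [sq_nonneg (‖q‖ - ‖p‖)]

theorem mem_subdifferential_zero_iff {z : E} :
    z ∈ subdifferential (fun q => ‖q‖ + ‖q‖ ^ 2 / 4) 0 ↔ ‖z‖ ≤ 1 := by
  simp only [subdifferential, Set.mem_ofPred_eq, norm_zero, sub_zero]
  constructor
  · intro h
    by_contra! hz
    have hn : 0 < ‖z‖ := by linarith
    -- at `q = t • z` the hypothesis reads `‖z‖ - 1 ≤ t * ‖z‖ / 4`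
    set t := 2 * (‖z‖ - 1) / ‖z‖ with ht
    have htpos : 0 < t := by positivity
    have htn : t * ‖z‖ = 2 * (‖z‖ - 1) := by rw [ht, div_mul_cancel₀ _ hn.ne']
    have hq := h (t • z)
    rw [real_inner_smul_right, real_inner_self_eq_norm_sq, norm_smul,
      Real.norm_of_nonneg htpos.le] at hq
    nlinarith
  · intro h q
    have : ⟪z, q⟫ ≤ ‖q‖ := (real_inner_le_norm z q).trans (mul_le_of_le_one_left (norm_nonneg q) h)
    nlinarith [sq_nonneg ‖q‖]

theorem differentiableAt_norm_add_sq_div_four {p : E} (hp : p ≠ 0) :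
    DifferentiableAt ℝ (fun q : E => ‖q‖ + ‖q‖ ^ 2 / 4) p := by
  have : DifferentiableAt ℝ (‖·‖) p := differentiableAt_id.norm ℝ hp
  fun_prop

theorem convexOn_sq_posPart_norm_sub_one :
    ConvexOn ℝ Set.univ (fun z : E => (max (‖z‖ - 1) 0) ^ 2) :=
  (((convexOn_norm convex_univ).add_const (-1)).sup (convexOn_const 0 convex_univ)).pow
    (fun _ _ => le_max_right _ _) 2 |>.congr fun z _ => by simp [sub_eq_add_neg]

end

theorem fenchelConj_eq {d : ℕ} {c : EuclideanSpace ℝ (Fin d) → ℝ}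
    (hc : ∀ z, c z = (max (‖z‖ - 1) 0) ^ 2) (p : EuclideanSpace ℝ (Fin d)) :
    fenchelConj c p = ((‖p‖ + ‖p‖ ^ 2 / 4 : ℝ) : EReal) := by
  refine le_antisymm (iSup_le fun z => EReal.coe_le_coe ?_) (le_iSup_of_le (conjArgmax p) ?_)
  · rw [hc]
    linarith [real_inner_le_norm p z, mul_sub_sq_posPart_le ‖p‖ ‖z‖ (norm_nonneg p)]
  · rw [hc, inner_conjArgmax_sub]

theorem face_eq_subdifferential {d : ℕ} {c : EuclideanSpace ℝ (Fin d) → ℝ}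
    {f : EuclideanSpace ℝ (Fin d) → ℝ} (hf : ∀ p, fenchelConj c p = f p)
    (p : EuclideanSpace ℝ (Fin d)) : face c p = subdifferential f p := by
  ext z
  simp only [face, subdifferential, Set.mem_ofPred_eq, hf, ← EReal.coe_add, EReal.coe_le_coe_iff]

/-- `c(z) = ((|z| − 1)₊)²` is convex, its faces `∂c*(p)` are singletons for
`p ≠ 0`, and `∂c*(0)` is the closed Euclidean unit ball. -/
theorem stmt16 {d : ℕ} (c : EuclideanSpace ℝ (Fin d) → ℝ)
    (hc : ∀ z, c z = (max (‖z‖ - 1) 0) ^ 2) :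
    ConvexOn ℝ Set.univ c ∧
      (∀ p : EuclideanSpace ℝ (Fin d), p ≠ 0 → ∃ z, face c p = {z}) ∧
      face c 0 = Metric.closedBall (0 : EuclideanSpace ℝ (Fin d)) 1 := by
  have hface := face_eq_subdifferential (fenchelConj_eq hc)
  refine ⟨(funext hc : c = _) ▸ convexOn_sq_posPart_norm_sub_one, fun p hp => ?_, ?_⟩
  · exact ⟨conjArgmax p, hface p ▸
      (subdifferential_subsingleton (differentiableAt_norm_add_sq_div_four hp)).eq_singleton_of_mem
        (conjArgmax_mem_subdifferential hp)⟩
  · ext z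
    rw [hface, mem_subdifferential_zero_iff, mem_closedBall_zero_iff]
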